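/- If the payoffs are normalized so that every player's payoff vector entries lie in [0,1], δ ∈ (0, 0.5], and ε ≤ δ/2, then for every player i and all profiles x, x', the correction term Λ_i^δ(x, x', ε) equals 0. In particular, with ε = δ/(δ+2), every pure strategy k outside Br_i^δ(x) satisfies (u_i^s((1−ε)x + εx'))_k ≤ max_{l ∈ Br_i^δ(x)} (u_i^s((1−ε)x + εx'))_l. -/

import Mathlib

open Finset
open scoped Classical

noncomputable section

/-- maximum of `v` over a finset `S` (junk value `0` if `S` is empty). -/
noncomputable def maxOnFin {α : Type*} (S : Finset α) (v : α → ℝ) : ℝ :=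
  if h : S.Nonempty then S.sup' h v else 0

/-- minimum of `v` over a finset `S` (junk value `0` if `S` is empty). -/
noncomputable def minOnFin {α : Type*} (S : Finset α) (v : α → ℝ) : ℝ :=
  if h : S.Nonempty then S.inf' h v else 0

section Polymatrix

variable {n : ℕ} (m : Fin n → ℕ) (N : Fin n → Finset (Fin n))
  (A : ∀ i j : Fin n, Matrix (Fin (m i)) (Fin (m j)) ℝ)

/-- vector of pure-strategy payoffs of player `i` against profile `x`:
`u_i^s(x) = Σ_{j ∈ N(i)} A_ij x_j`. -/
def usVec (i : Fin n) (x : ∀ j, Fin (m j) → ℝ) : Fin (m i) → ℝ :=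
  fun k => ∑ j ∈ N i, ∑ q, A i j k q * x j q

/-- payoff to player `i` from playing the (possibly formal) strategy `y`
against profile `x`: `u_i(y, x) = yᵀ u_i^s(x)`. -/
def payTo (i : Fin n) (y : Fin (m i) → ℝ) (x : ∀ j, Fin (m j) → ℝ) : ℝ :=
  ∑ k, y k * usVec m N A i x k

/-- payoff of player `i` under profile `x`. -/
def payoff (i : Fin n) (x : ∀ j, Fin (m j) → ℝ) : ℝ := payTo m N A i (x i) x

/-- best-response payoff of player `i` against `x`. -/
def brp (i : Fin n) (x : ∀ j, Fin (m j) → ℝ) : ℝ := maxOnFin univ (usVec m N A i x)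

/-- pure best responses of player `i` against `x`. -/
def brSet (i : Fin n) (x : ∀ j, Fin (m j) → ℝ) : Finset (Fin (m i)) :=
  univ.filter fun k => ∀ l, usVec m N A i x l ≤ usVec m N A i x k

/-- `δ`-best responses of player `i` against `x`. -/
def brdSet (δ : ℝ) (i : Fin n) (x : ∀ j, Fin (m j) → ℝ) : Finset (Fin (m i)) :=
  univ.filter fun k => brp m N A i x - δ ≤ usVec m N A i x k

/-- regret of player `i` under `x`: `f_i(x)`. -/
def regret (i : Fin n) (x : ∀ j, Fin (m j) → ℝ) : ℝ :=
  brp m N A i x - payoff m N A i x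

/-- maximum regret `f(x) = max_i f_i(x)`. -/
def maxRegret (x : ∀ j, Fin (m j) → ℝ) : ℝ := maxOnFin univ fun i => regret m N A i x

/-- set of players with maximum regret `K(x)`. -/
def Kset (x : ∀ j, Fin (m j) → ℝ) : Finset (Fin n) :=
  univ.filter fun i => regret m N A i x = maxRegret m N A x

/-- `Df_i^δ(x, x')`. -/
def Dfd (δ : ℝ) (i : Fin n) (x x' : ∀ j, Fin (m j) → ℝ) : ℝ :=
  maxOnFin (brdSet m N A δ i x) (usVec m N A i x')
    - payTo m N A i (x i) x' - payTo m N A i (x' i) x + payTo m N A i (x i) x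

/-- `Df^δ(x, x') = max_{i ∈ K(x)} Df_i^δ(x, x') - f(x)`. -/
def DfdAll (δ : ℝ) (x x' : ∀ j, Fin (m j) → ℝ) : ℝ :=
  maxOnFin (Kset m N A x) (fun i => Dfd m N A δ i x x') - maxRegret m N A x

/-- `Df_i(x, x')` (with exact best responses). -/
def Dfbr (i : Fin n) (x x' : ∀ j, Fin (m j) → ℝ) : ℝ :=
  maxOnFin (brSet m N A i x) (usVec m N A i x')
    - payTo m N A i (x i) x' - payTo m N A i (x' i) x + payTo m N A i (x i) x

/-- the profile `(1-ε)x + εx'`. -/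
def mix (x x' : ∀ j, Fin (m j) → ℝ) (ε : ℝ) : ∀ j, Fin (m j) → ℝ :=
  fun j => (1 - ε) • x j + ε • x' j

/-- `Λ_i^δ(x, x', ε)`; if the complement of the `δ`-best-response set is empty
the inner maximum is `-∞`, i.e. `Λ_i^δ = 0`. -/
def Lamd (δ : ℝ) (i : Fin n) (x x' : ∀ j, Fin (m j) → ℝ) (ε : ℝ) : ℝ :=
  if _h : ((brdSet m N A δ i x)ᶜ).Nonempty then
    max 0 (maxOnFin (brdSet m N A δ i x)ᶜ (usVec m N A i (mix m x x' ε))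
         - maxOnFin (brdSet m N A δ i x) (usVec m N A i (mix m x x' ε)))
  else 0

/-- `Λ_i(x, x', ε)` (with exact best responses). -/
def LamBr (i : Fin n) (x x' : ∀ j, Fin (m j) → ℝ) (ε : ℝ) : ℝ :=
  if _h : ((brSet m N A i x)ᶜ).Nonempty then
    max 0 (maxOnFin (brSet m N A i x)ᶜ (usVec m N A i (mix m x x' ε))
         - maxOnFin (brSet m N A i x) (usVec m N A i (mix m x x' ε)))
  else 0

/-- `x` is a mixed strategy profile. -/
def isProfile (x : ∀ j, Fin (m j) → ℝ) : Prop :=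
  ∀ j, x j ∈ stdSimplex ℝ (Fin (m j))

/-- the game is normalized: all pure-strategy payoffs of every player lie in
`[0,1]` against every mixed profile. -/
def normalized : Prop :=
  ∀ i (x : ∀ j, Fin (m j) → ℝ), isProfile m x →
    ∀ k, usVec m N A i x k ∈ Set.Icc (0:ℝ) 1

lemma le_maxOnFin {α : Type*} {S : Finset α} (v : α → ℝ) {a : α} (ha : a ∈ S) :
    v a ≤ maxOnFin S v := by
  rw [maxOnFin, dif_pos ⟨a, ha⟩]
  exact le_sup' v ha

lemma maxOnFin_le {α : Type*} {S : Finset α} (hS : S.Nonempty) {v : α → ℝ} {c : ℝ}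
    (h : ∀ a ∈ S, v a ≤ c) : maxOnFin S v ≤ c := by
  rw [maxOnFin, dif_pos hS]
  exact sup'_le hS v h

/-- The mixing step: a gap of `δ` at `x` survives moving a fraction `ε` towards `x'`
as long as `ε ≤ (1 - ε) δ`, because payoffs at `x'` can differ by at most `1`. -/
lemma mix_le_mix_of_add_lt {a b p q δ ε : ℝ} (hab : a + δ < b) (hp : p ≤ 1) (hq : 0 ≤ q)
    (hε₀ : 0 ≤ ε) (hε₁ : ε ≤ 1) (hε : ε ≤ (1 - ε) * δ) :
    (1 - ε) * a + ε * p ≤ (1 - ε) * b + ε * q :=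
  calc (1 - ε) * a + ε * p ≤ (1 - ε) * (b - δ) + ε * 1 := by gcongr; linarith
    _ ≤ (1 - ε) * b := by linarith
    _ ≤ (1 - ε) * b + ε * q := le_add_of_nonneg_right (mul_nonneg hε₀ hq)

lemma le_one_sub_mul_of_le_half {δ ε : ℝ} (hδ : δ ≤ 1) (hε₀ : 0 ≤ ε) (hε : ε ≤ δ / 2) :
    ε ≤ (1 - ε) * δ := by
  nlinarith

lemma usVec_mix (i : Fin n) (x x' : ∀ j, Fin (m j) → ℝ) (ε : ℝ) (k : Fin (m i)) :
    usVec m N A i (mix m x x' ε) k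
      = (1 - ε) * usVec m N A i x k + ε * usVec m N A i x' k := by
  simp only [usVec, mix, Pi.add_apply, Pi.smul_apply, smul_eq_mul, mul_sum, ← sum_add_distrib]
  exact sum_congr rfl fun _ _ => sum_congr rfl fun _ _ => by ring

lemma exists_usVec_eq_brp (i : Fin n) (x : ∀ j, Fin (m j) → ℝ) [Nonempty (Fin (m i))] :
    ∃ l, usVec m N A i x l = brp m N A i x := by
  obtain ⟨l, -, hl⟩ := exists_mem_eq_sup' univ_nonempty (usVec m N A i x)
  exact ⟨l, by rw [brp, maxOnFin, dif_pos univ_nonempty, hl]⟩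

lemma usVec_add_lt_brp_of_notMem_brdSet {δ : ℝ} {i : Fin n} {x : ∀ j, Fin (m j) → ℝ}
    {k : Fin (m i)} (hk : k ∉ brdSet m N A δ i x) :
    usVec m N A i x k + δ < brp m N A i x := by
  simp only [brdSet, mem_filter, mem_univ, true_and, not_le] at hk
  linarith

lemma usVec_mix_le_maxOnFin_brdSet (hnorm : normalized m N A) {δ ε : ℝ}
    (hε₀ : 0 ≤ ε) (hε₁ : ε ≤ 1) (hε : ε ≤ (1 - ε) * δ)
    {x x' : ∀ j, Fin (m j) → ℝ} (hx' : isProfile m x') {i : Fin n} {k : Fin (m i)}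
    (hk : k ∉ brdSet m N A δ i x) :
    usVec m N A i (mix m x x' ε) k
      ≤ maxOnFin (brdSet m N A δ i x) (usVec m N A i (mix m x x' ε)) := by
  have : Nonempty (Fin (m i)) := ⟨k⟩
  obtain ⟨l, hl⟩ := exists_usVec_eq_brp m N A i x
  have hδ : 0 ≤ δ := by
    by_contra! hneg
    nlinarith [mul_nonneg (sub_nonneg.2 hε₁) (neg_nonneg.2 hneg.le)]
  have hl_mem : l ∈ brdSet m N A δ i x := by
    simp only [brdSet, mem_filter, mem_univ, true_and, hl]
    linarith
  have hgap := usVec_add_lt_brp_of_notMem_brdSet m N A hk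
  refine le_trans ?_ (le_maxOnFin _ hl_mem)
  rw [usVec_mix, usVec_mix]
  exact mix_le_mix_of_add_lt (hl ▸ hgap) (hnorm i x' hx' k).2 (hnorm i x' hx' l).1 hε₀ hε₁ hε

lemma Lamd_eq_zero_of_forall_le {δ ε : ℝ} {i : Fin n} {x x' : ∀ j, Fin (m j) → ℝ}
    (h : ∀ k ∉ brdSet m N A δ i x, usVec m N A i (mix m x x' ε) k
      ≤ maxOnFin (brdSet m N A δ i x) (usVec m N A i (mix m x x' ε))) :
    Lamd m N A δ i x x' ε = 0 := by
  rw [Lamd]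
  split_ifs with hne
  · refine max_eq_left (sub_nonpos.mpr (maxOnFin_le hne fun k hk => h k ?_))
    simpa using hk
  · rfl

theorem stmt6 (hnorm : normalized m N A)
    (δ : ℝ) (hδ : 0 < δ) (hδ' : δ ≤ 0.5)
    (x x' : ∀ j, Fin (m j) → ℝ) (hx' : isProfile m x') :
    (∀ ε : ℝ, 0 ≤ ε → ε ≤ δ / 2 → ∀ i, Lamd m N A δ i x x' ε = 0) ∧
    (∀ i, ∀ k ∉ brdSet m N A δ i x,
      usVec m N A i (mix m x x' (δ / (δ + 2))) k
        ≤ maxOnFin (brdSet m N A δ i x)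
            (usVec m N A i (mix m x x' (δ / (δ + 2))))) := by
  have key : ∀ ε : ℝ, 0 ≤ ε → ε ≤ δ / 2 → ∀ i, ∀ k ∉ brdSet m N A δ i x,
      usVec m N A i (mix m x x' ε) k
        ≤ maxOnFin (brdSet m N A δ i x) (usVec m N A i (mix m x x' ε)) :=
    fun ε hε₀ hε i k hk => usVec_mix_le_maxOnFin_brdSet m N A hnorm hε₀ (by linarith)
      (le_one_sub_mul_of_le_half (by linarith) hε₀ hε) hx' hk
  refine ⟨fun ε hε₀ hε i => Lamd_eq_zero_of_forall_le m N A (key ε hε₀ hε i), key _ ?_ ?_⟩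
  · positivity
  · exact div_le_div_of_nonneg_left hδ.le two_pos (by linarith)

end Polymatrix
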